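/- Selecting the top-k candidates by noisy utility with i.i.d. Gumbel(2Δq/ε) noise added to each utility is equal in distribution to sequentially applying the exponential mechanism (with parameter ε each time, without replacement) k times; hence the top-k selection inherits the privacy of the k-fold sequential exponential mechanism. -/

import Mathlib

open MeasureTheory ProbabilityTheory Real

/-- The Gumbel distribution with scale `b`, with density `(1/b) exp(-(y/b + e^{-y/b}))`. -/
noncomputable def gumbelMeasure (b : ℝ) : Measure ℝ :=
  volume.withDensity fun y => ENNReal.ofReal ((1 / b) * exp (-(y / b + exp (-(y / b)))))

/-- The event that the ordered top-`k` candidates by noisy utility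
`y ↦ u y + G y ω` are exactly `σ 0, σ 1, …, σ (k-1)` (in decreasing order). -/
def topKEvent {Y Ω : Type*} {k : ℕ} (u : Y → ℝ) (G : Y → Ω → ℝ) (σ : Fin k → Y) :
    Set Ω :=
  {ω | (∀ i j : Fin k, i < j → u (σ j) + G (σ j) ω < u (σ i) + G (σ i) ω) ∧
       (∀ i : Fin k, ∀ y : Y, y ∉ Set.range σ → u y + G y ω < u (σ i) + G (σ i) ω)}

/-!
Write `w y = exp (u y / b)`. Gumbel noise gives `P (u y + G y < t) = exp (-w y * exp (-t / b))`,
so a candidate `y` beats independent competitors of total weight `C` while scoring below `t` with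
probability `w y / (w y + C) * exp (-(w y + C) * exp (-t / b))`. Conditioning on the noise of the
first pick, induction on the number of picks gives the probability that the top scorers appear in
the order `σ` with all scores below `t`: the Plackett–Luce product of the sequential exponential
mechanism times `exp (-(∑ w) * exp (-t / b))`; letting `t → ∞` removes the cap. Between
neighbouring datasets every weight moves by a factor of at most `exp (ε / 2)`, so every factor
`w (σ i) / ∑ w` of the product moves by at most `exp ε`.
-/

open Set Filter Topology

section Gumbel

theorem lintegral_Iio_ofReal_eq_of_hasDerivAt {f f' : ℝ → ℝ}
    (hderiv : ∀ x, HasDerivAt f (f' x) x) (hf' : ∀ x, 0 ≤ f' x) (hf : Tendsto f atBot (𝓝 0))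
    (T : ℝ) :
    ∫⁻ x in Iio T, ENNReal.ofReal (f' x) = ENNReal.ofReal (f T) := by
  have hint : IntegrableOn f' (Iio T) := by
    have hrefl : IntegrableOn (fun x => f' (-x)) (Ioi (-T)) :=
      integrableOn_Ioi_deriv_of_nonneg' (g := fun x => -f (-x))
        (fun x _ => ((hderiv (-x)).comp x (hasDerivAt_neg x)).neg.congr_deriv (by simp))
        (fun x _ => hf' _) (by simpa using (hf.comp tendsto_neg_atTop_atBot).neg)
    simpa using hrefl.comp_neg_Iio
  rw [← ofReal_integral_eq_lintegral_ofReal hint (ae_of_all _ hf'),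
    ← integral_Iic_eq_integral_Iio, integral_Iic_of_hasDerivAt_of_tendsto' (fun x _ => hderiv x)
      ((integrableOn_Iic_iff_integrableOn_Iio).mpr hint) hf, sub_zero]

variable {b : ℝ}

theorem setLIntegral_gumbelMeasure_Iio (hb : 0 < b) {C : ℝ} (hC : 0 ≤ C) (s t : ℝ) :
    ∫⁻ a in Iio (t - s), ENNReal.ofReal (exp (-C * exp (-(s + a) / b))) ∂gumbelMeasure b
      = ENNReal.ofReal
          (exp (s / b) / (exp (s / b) + C) * exp (-(exp (s / b) + C) * exp (-t / b))) := by
  set c := exp (s / b)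
  have hc : 0 < c := exp_pos _
  have hshift : ∀ a, exp (-(a / b)) = c * exp (-(s + a) / b) := fun a => by
    rw [← exp_add]
    ring_nf
  have hderiv : ∀ a, HasDerivAt (fun a => c / (c + C) * exp (-(c + C) * exp (-(s + a) / b)))
      (exp (-(a / b)) / b * exp (-(c + C) * exp (-(s + a) / b))) a := by
    intro a
    have hin : HasDerivAt (fun a => -(s + a) / b) (-1 / b) a := by
      simpa using ((hasDerivAt_id a).const_add s).neg.div_const b
    refine ((hin.exp.const_mul (-(c + C))).exp.const_mul (c / (c + C))).congr_deriv ?_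
    rw [hshift]
    field_simp
  have hlim : Tendsto (fun a => c / (c + C) * exp (-(c + C) * exp (-(s + a) / b))) atBot
      (𝓝 0) := by
    have hin : Tendsto (fun a => -(s + a) / b) atBot atTop :=
      (tendsto_neg_atBot_atTop.comp (tendsto_atBot_add_const_left _ s tendsto_id)).atTop_div_const
        hb
    have hexp := (tendsto_exp_atTop.comp hin).const_mul_atTop_of_neg (r := -(c + C)) (by linarith)
    simpa using (tendsto_exp_atBot.comp hexp).const_mul (c / (c + C))
  rw [gumbelMeasure, setLIntegral_withDensity_eq_setLIntegral_mul _ (by fun_prop) (by fun_prop)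
      measurableSet_Iio,
    setLIntegral_congr_fun measurableSet_Iio (g := fun a => ENNReal.ofReal
      (exp (-(a / b)) / b * exp (-(c + C) * exp (-(s + a) / b)))) (fun a _ => ?_),
    lintegral_Iio_ofReal_eq_of_hasDerivAt hderiv (fun a => by positivity) hlim, add_sub_cancel]
  dsimp only [Pi.mul_apply]
  rw [← ENNReal.ofReal_mul (by positivity), neg_add, exp_add, hshift, show -(c + C) *
    exp (-(s + a) / b) = -(c * exp (-(s + a) / b)) + -C * exp (-(s + a) / b) by ring, exp_add]
  ring_nf

theorem gumbelMeasure_Iio (hb : 0 < b) (s t : ℝ) :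
    gumbelMeasure b (Iio (t - s)) = ENNReal.ofReal (exp (-exp (s / b) * exp (-t / b))) := by
  simpa [(exp_pos (s / b)).ne'] using setLIntegral_gumbelMeasure_Iio hb le_rfl s t

end Gumbel

section Independence

variable {Ω : Type*} [MeasurableSpace Ω] {P : Measure Ω}

theorem ProbabilityTheory.IndepFun.measure_prodMk_mem_eq_lintegral [IsFiniteMeasure P]
    {α β : Type*} [MeasurableSpace α] [MeasurableSpace β] {X : Ω → α} {Z : Ω → β}
    (h : IndepFun X Z P) (hX : Measurable X) (hZ : Measurable Z) {C : Set (α × β)}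
    (hC : MeasurableSet C) :
    P {ω | (X ω, Z ω) ∈ C} = ∫⁻ a, P {ω | (a, Z ω) ∈ C} ∂(P.map X) := by
  change P ((fun ω => (X ω, Z ω)) ⁻¹' C) = ∫⁻ a, P ((fun ω => (a, Z ω)) ⁻¹' C) ∂(P.map X)
  rw [← Measure.map_apply (hX.prodMk hZ) hC,
    (indepFun_iff_map_prod_eq_prod_map_map hX.aemeasurable hZ.aemeasurable).1 h,
    Measure.prod_apply hC]
  exact lintegral_congr fun a => Measure.map_apply hZ (measurable_prodMk_left hC)

theorem ProbabilityTheory.iIndepFun.measure_mem_eq_lintegral_update {ι β : Type*} [Fintype ι]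
    [DecidableEq ι] [MeasurableSpace β] {G : ι → Ω → β} (hindep : iIndepFun G P)
    (hmeas : ∀ i, Measurable (G i)) (y : ι) {B : Set (ι → β)} (hB : MeasurableSet B) :
    P {ω | (fun i => G i ω) ∈ B}
      = ∫⁻ a, P {ω | Function.update (fun i => G i ω) y a ∈ B} ∂(P.map (G y)) := by
  have := hindep.isProbabilityMeasure
  set T := Finset.univ.erase y
  let Z : Ω → T → β := fun ω i => G i ω
  let glue : β × (T → β) → ι → β := fun p i => if h : i ∈ T then p.2 ⟨i, h⟩ else p.1
  have hglue : Measurable glue := by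
    refine measurable_pi_lambda _ fun i => ?_
    by_cases h : i ∈ T
    · simp only [glue, dif_pos h]; fun_prop
    · simp only [glue, dif_neg h]; fun_prop
  have hZ : IndepFun (G y) Z P :=
    (hindep.indepFun_finset {y} T (by simp [T]) hmeas).comp
      (measurable_pi_apply (⟨y, Finset.mem_singleton_self y⟩ : ({y} : Finset ι))) measurable_id
  have hglue_update : ∀ a ω, glue (a, Z ω) = Function.update (fun i => G i ω) y a := by
    intro a ω
    funext i
    by_cases h : i = y
    · subst h; simp [glue, T]
    · simp [glue, T, h, Z]
  calc P {ω | (fun i => G i ω) ∈ B} = P {ω | (G y ω, Z ω) ∈ glue ⁻¹' B} := by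
        simp only [mem_preimage, hglue_update, Function.update_eq_self]
    _ = _ := hZ.measure_prodMk_mem_eq_lintegral (hmeas y) (by fun_prop) (hglue hB)
    _ = _ := by simp only [mem_preimage, hglue_update]

end Independence

section SequentialArgmax

variable {Y : Type*} [DecidableEq Y] {m : ℕ}

theorem tail_mem_erase_zero {S : Finset Y} {τ : Fin (m + 1) → Y} (hτ : Function.Injective τ)
    (hτS : ∀ i, τ i ∈ S) (i : Fin m) : Fin.tail τ i ∈ S.erase (τ 0) :=
  Finset.mem_erase.2 ⟨fun h => Fin.succ_ne_zero i (hτ h), hτS _⟩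

def unchosen (S : Finset Y) (τ : Fin m → Y) (i : Fin m) : Finset Y :=
  S.filter fun z => ∀ j, j < i → τ j ≠ z

theorem unchosen_zero (S : Finset Y) (τ : Fin (m + 1) → Y) : unchosen S τ 0 = S :=
  Finset.filter_true_of_mem fun _ _ j hj => absurd hj (Fin.not_lt_zero j)

theorem unchosen_succ (S : Finset Y) (τ : Fin (m + 1) → Y) (i : Fin m) :
    unchosen S τ i.succ = unchosen (S.erase (τ 0)) (Fin.tail τ) i := by
  ext z
  simp only [unchosen, Finset.mem_filter, Finset.mem_erase]
  simp only [Fin.forall_fin_succ, Fin.succ_pos, Fin.succ_lt_succ_iff, Fin.tail, true_implies]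
  tauto

/-- The probability that the exponential mechanism with weights `w`, applied sequentially without
replacement to the candidates `S`, selects `τ 0, τ 1, …` in this order. -/
noncomputable def plackettLuce (w : Y → ℝ) (S : Finset Y) (τ : Fin m → Y) : ℝ :=
  ∏ i, w (τ i) / ∑ z ∈ unchosen S τ i, w z

theorem plackettLuce_succ (w : Y → ℝ) (S : Finset Y) (τ : Fin (m + 1) → Y) :
    plackettLuce w S τ
      = w (τ 0) / (∑ z ∈ S, w z) * plackettLuce w (S.erase (τ 0)) (Fin.tail τ) := by
  simp only [plackettLuce, Fin.prod_univ_succ, unchosen_zero, unchosen_succ]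
  rfl

def IsSequentialArgmax (v : Y → ℝ) (S : Finset Y) (τ : Fin m → Y) : Prop :=
  ∀ i, ∀ z ∈ unchosen S τ i, z ≠ τ i → v z < v (τ i)

theorem isSequentialArgmax_succ_iff {v : Y → ℝ} {S : Finset Y} {τ : Fin (m + 1) → Y} :
    IsSequentialArgmax v S τ ↔ (∀ z ∈ S.erase (τ 0), v z < v (τ 0)) ∧
      IsSequentialArgmax v (S.erase (τ 0)) (Fin.tail τ) := by
  simp only [IsSequentialArgmax, Fin.forall_fin_succ, unchosen_zero, unchosen_succ,
    Finset.mem_erase, Fin.tail]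
  exact and_congr ⟨fun h z hz => h z hz.2 hz.1, fun h z hz hne => h z ⟨hne, hz⟩⟩ Iff.rfl

theorem isSequentialArgmax_univ_iff [Fintype Y] {v : Y → ℝ} {τ : Fin m → Y}
    (hτ : Function.Injective τ) :
    IsSequentialArgmax v Finset.univ τ ↔
      (∀ i j, i < j → v (τ j) < v (τ i)) ∧ ∀ i, ∀ z ∉ range τ, v z < v (τ i) := by
  simp only [IsSequentialArgmax, unchosen, Finset.mem_filter, Finset.mem_univ, true_and]
  refine ⟨fun h => ⟨fun i j hij => ?_, fun i z hz => ?_⟩, fun ⟨hord, hrest⟩ i z hz hne => ?_⟩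
  · exact h i (τ j) (fun l hl hlj => (hl.trans hij).ne (hτ hlj)) (fun hji => hij.ne' (hτ hji))
  · exact h i z (fun l _ hl => hz ⟨l, hl⟩) (fun hzi => hz ⟨i, hzi.symm⟩)
  · rcases em (z ∈ range τ) with ⟨j, rfl⟩ | hzr
    · exact hord i j (lt_of_le_of_ne (not_lt.1 fun hji => hz j hji rfl) fun hij => hne (hij ▸ rfl))
    · exact hrest i z hzr

/-- The cap `t` makes the event recursive: after the first pick, the remaining picks form the same
event on `S.erase (τ 0)`, capped by the score of `τ 0` (`mem_seqArgmaxBelow_succ_iff`). -/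
def seqArgmaxBelow (S : Finset Y) (τ : Fin m → Y) (t : ℝ) : Set (Y → ℝ) :=
  {v | (∀ z ∈ S, v z < t) ∧ IsSequentialArgmax v S τ}

theorem seqArgmaxBelow_mono (S : Finset Y) (τ : Fin m → Y) : Monotone (seqArgmaxBelow S τ) :=
  fun _ _ htt' _ hv => ⟨fun z hz => (hv.1 z hz).trans_le htt', hv.2⟩

theorem iUnion_seqArgmaxBelow_univ [Fintype Y] (τ : Fin m → Y) :
    ⋃ t, seqArgmaxBelow Finset.univ τ t = {v | IsSequentialArgmax v Finset.univ τ} := by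
  ext v
  simp only [seqArgmaxBelow, mem_iUnion, mem_ofPred_eq, Finset.mem_univ, true_implies]
  refine ⟨fun ⟨_, _, h⟩ => h, fun h => ?_⟩
  obtain ⟨M, hM⟩ := (finite_range v).bddAbove
  exact ⟨M + 1, fun z => (hM ⟨z, rfl⟩).trans_lt (lt_add_one M), h⟩

theorem measurableSet_seqArgmaxBelow (S : Finset Y) (τ : Fin m → Y) (t : ℝ) :
    MeasurableSet (seqArgmaxBelow S τ t) := by
  simp only [seqArgmaxBelow, IsSequentialArgmax, ofPred_and, ofPred_forall]
  refine .inter (.biInter S.countable_toSet fun z _ => measurableSet_lt (measurable_pi_apply z)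
    measurable_const) (.iInter fun i => .biInter (Finset.countable_toSet _) fun z _ =>
      .iInter fun _ => measurableSet_lt (measurable_pi_apply z) (measurable_pi_apply _))

theorem mem_seqArgmaxBelow_succ_iff {S : Finset Y} {τ : Fin (m + 1) → Y} (h0 : τ 0 ∈ S)
    {v : Y → ℝ} {t : ℝ} :
    v ∈ seqArgmaxBelow S τ t ↔
      v (τ 0) < t ∧ v ∈ seqArgmaxBelow (S.erase (τ 0)) (Fin.tail τ) (v (τ 0)) := by
  simp only [seqArgmaxBelow, mem_ofPred_eq, isSequentialArgmax_succ_iff]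
  constructor
  · rintro ⟨hlt, hmax, hrest⟩
    exact ⟨hlt _ h0, hmax, hrest⟩
  · rintro ⟨h0t, hmax, hrest⟩
    refine ⟨fun z hz => ?_, hmax, hrest⟩
    rcases eq_or_ne z (τ 0) with rfl | hne
    · exact h0t
    · exact (hmax z (Finset.mem_erase.2 ⟨hne, hz⟩)).trans h0t

theorem mem_seqArgmaxBelow_congr {S : Finset Y} {τ : Fin m → Y} (hτS : ∀ i, τ i ∈ S) {t : ℝ}
    {v v' : Y → ℝ} (h : ∀ z ∈ S, v z = v' z) :
    v ∈ seqArgmaxBelow S τ t ↔ v' ∈ seqArgmaxBelow S τ t := by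
  have hU : ∀ i, ∀ z ∈ unchosen S τ i, v z = v' z :=
    fun i z hz => h z (Finset.mem_filter.1 hz).1
  simp only [seqArgmaxBelow, IsSequentialArgmax, mem_ofPred_eq]
  exact and_congr (forall₂_congr fun z hz => by rw [h z hz])
    (forall_congr' fun i => forall₂_congr fun z hz => by rw [hU i z hz, h _ (hτS i)])

theorem update_mem_seqArgmaxBelow_iff {S : Finset Y} {τ : Fin (m + 1) → Y}
    (hτ : Function.Injective τ) (hτS : ∀ i, τ i ∈ S) (v : Y → ℝ) (a t : ℝ) :
    Function.update v (τ 0) a ∈ seqArgmaxBelow S τ t ↔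
      a < t ∧ v ∈ seqArgmaxBelow (S.erase (τ 0)) (Fin.tail τ) a := by
  rw [mem_seqArgmaxBelow_succ_iff (hτS 0), Function.update_self,
    mem_seqArgmaxBelow_congr (tail_mem_erase_zero hτ hτS)
      fun z hz => Function.update_of_ne (Finset.ne_of_mem_erase hz) _ _]

end SequentialArgmax

section GumbelTopK

variable {Y Ω : Type*} [MeasurableSpace Ω] {P : Measure Ω} {b : ℝ} {G : Y → Ω → ℝ}

theorem measure_forall_add_lt (hb : 0 < b) (hmeas : ∀ y, Measurable (G y))
    (hindep : iIndepFun G P) (hdist : ∀ y, P.map (G y) = gumbelMeasure b) (u : Y → ℝ)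
    (S : Finset Y) (t : ℝ) :
    P {ω | ∀ z ∈ S, u z + G z ω < t}
      = ENNReal.ofReal (exp (-(∑ z ∈ S, exp (u z / b)) * exp (-t / b))) := by
  have hev : {ω | ∀ z ∈ S, u z + G z ω < t} = ⋂ z ∈ S, G z ⁻¹' Iio (t - u z) := by
    ext ω
    simp [lt_sub_iff_add_lt']
  rw [hev, hindep.meas_biInter fun z _ => ⟨_, measurableSet_Iio, rfl⟩]
  simp_rw [← Measure.map_apply (hmeas _) measurableSet_Iio, hdist, gumbelMeasure_Iio hb]
  rw [neg_mul, Finset.sum_mul, ← Finset.sum_neg_distrib, exp_sum,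
    ENNReal.ofReal_prod_of_nonneg fun z _ => (exp_pos _).le]
  simp_rw [neg_mul]

variable [Fintype Y] [DecidableEq Y]

theorem measure_seqArgmaxBelow (hb : 0 < b) (hmeas : ∀ y, Measurable (G y))
    (hindep : iIndepFun G P) (hdist : ∀ y, P.map (G y) = gumbelMeasure b) (u : Y → ℝ) {m : ℕ}
    {S : Finset Y} {τ : Fin m → Y} (hτ : Function.Injective τ) (hτS : ∀ i, τ i ∈ S) (t : ℝ) :
    P {ω | (fun z => u z + G z ω) ∈ seqArgmaxBelow S τ t}
      = ENNReal.ofReal (plackettLuce (fun z => exp (u z / b)) S τ *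
          exp (-(∑ z ∈ S, exp (u z / b)) * exp (-t / b))) := by
  induction m generalizing S t with
  | zero =>
    simpa [seqArgmaxBelow, IsSequentialArgmax, plackettLuce] using
      measure_forall_add_lt hb hmeas hindep hdist u S t
  | succ m ih =>
    have hτ' : Function.Injective (Fin.tail τ) := hτ.comp (Fin.succ_injective _)
    have hshift : ∀ ω a, (fun z => u z + Function.update (fun z => G z ω) (τ 0) a z)
        = Function.update (fun z => u z + G z ω) (τ 0) (u (τ 0) + a) := by
      intro ω a
      funext z
      by_cases hz : z = τ 0
      · subst hz; simp
      · simp [hz]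
    have hslice : ∀ a, P {ω | Function.update (fun z => G z ω) (τ 0) a ∈
          (fun x z => u z + x z) ⁻¹' seqArgmaxBelow S τ t}
        = (Iio (t - u (τ 0))).indicator (fun a => ENNReal.ofReal
            (plackettLuce (fun z => exp (u z / b)) (S.erase (τ 0)) (Fin.tail τ) *
              exp (-(∑ z ∈ S.erase (τ 0), exp (u z / b)) * exp (-(u (τ 0) + a) / b)))) a := by
      intro a
      simp only [mem_preimage, hshift, update_mem_seqArgmaxBelow_iff hτ hτS]
      by_cases ha : u (τ 0) + a < t
      · rw [indicator_of_mem (by simpa [lt_sub_iff_add_lt'] using ha),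
          ← ih hτ' (tail_mem_erase_zero hτ hτS)]
        simp [ha]
      · rw [indicator_of_notMem (by simpa [lt_sub_iff_add_lt'] using ha)]
        simp [ha]
    have hB : MeasurableSet ((fun (x : Y → ℝ) z => u z + x z) ⁻¹' seqArgmaxBelow S τ t) :=
      measurableSet_seqArgmaxBelow S τ t |>.preimage (by fun_prop)
    change P {ω | (fun z => G z ω) ∈ (fun x z => u z + x z) ⁻¹' seqArgmaxBelow S τ t} = _
    rw [hindep.measure_mem_eq_lintegral_update hmeas (τ 0) hB, hdist, lintegral_congr hslice,
      lintegral_indicator measurableSet_Iio]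
    simp_rw [ENNReal.ofReal_mul' (exp_pos _).le]
    rw [lintegral_const_mul' _ _ ENNReal.ofReal_ne_top,
      setLIntegral_gumbelMeasure_Iio hb (Finset.sum_nonneg fun z _ => (exp_pos _).le),
      plackettLuce_succ, ← Finset.add_sum_erase S _ (hτS 0),
      ← ENNReal.ofReal_mul' (by positivity), ← ENNReal.ofReal_mul' (exp_pos _).le]
    congr 1
    ring

theorem measure_topKEvent (hb : 0 < b) (hmeas : ∀ y, Measurable (G y)) (hindep : iIndepFun G P)
    (hdist : ∀ y, P.map (G y) = gumbelMeasure b) (u : Y → ℝ) {k : ℕ} {σ : Fin k → Y}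
    (hσ : Function.Injective σ) :
    P (topKEvent u G σ) = ENNReal.ofReal (plackettLuce (fun z => exp (u z / b)) Finset.univ σ) := by
  set E : ℝ → Set Ω := fun t => {ω | (fun z => u z + G z ω) ∈ seqArgmaxBelow Finset.univ σ t}
  have hE : topKEvent u G σ = ⋃ t, E t := by
    ext ω
    have h := Set.ext_iff.1 (iUnion_seqArgmaxBelow_univ σ) (fun z => u z + G z ω)
    simp only [mem_iUnion, mem_ofPred_eq, isSequentialArgmax_univ_iff hσ] at h
    simp only [E, topKEvent, mem_iUnion, mem_ofPred_eq, h]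
  have hcap : Tendsto (fun t => exp (-(∑ z, exp (u z / b)) * exp (-t / b))) atTop (𝓝 1) := by
    have h := (tendsto_exp_atBot.comp (tendsto_neg_atTop_atBot.atBot_div_const hb)).const_mul
      (-(∑ z, exp (u z / b)))
    simpa [Function.comp_def] using (continuous_exp.tendsto _).comp h
  rw [hE]
  refine tendsto_nhds_unique (tendsto_measure_iUnion_atTop fun t t' htt' ω hω =>
    seqArgmaxBelow_mono Finset.univ σ htt' hω) ?_
  simp only [Function.comp_def, E, measure_seqArgmaxBelow hb hmeas hindep hdist u hσ
    (fun i => Finset.mem_univ (σ i))]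
  simpa [Function.comp_def] using (ENNReal.continuous_ofReal.tendsto _).comp
    (hcap.const_mul (plackettLuce (fun z => exp (u z / b)) Finset.univ σ))

end GumbelTopK

section Privacy

variable {Y : Type*} {w w' : Y → ℝ} {c : ℝ}

theorem div_sum_le_sq_mul_div_sum (hw : ∀ z, 0 < w z) (hw' : ∀ z, 0 < w' z)
    (hle : ∀ z, w z ≤ c * w' z) (hle' : ∀ z, w' z ≤ c * w z) (U : Finset Y) (x : Y) :
    w x / ∑ z ∈ U, w z ≤ c ^ 2 * (w' x / ∑ z ∈ U, w' z) := by
  rcases U.eq_empty_or_nonempty with rfl | hU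
  · simp
  have hc : 0 ≤ c := nonneg_of_mul_nonneg_left ((hw x).le.trans (hle x)) (hw' x)
  have hsum : ∑ z ∈ U, w' z ≤ c * ∑ z ∈ U, w z := by
    rw [Finset.mul_sum]
    exact Finset.sum_le_sum fun z _ => hle' z
  rw [mul_div_assoc', div_le_div_iff₀ (Finset.sum_pos (fun z _ => hw z) hU)
    (Finset.sum_pos (fun z _ => hw' z) hU)]
  calc w x * ∑ z ∈ U, w' z ≤ (c * w' x) * (c * ∑ z ∈ U, w z) :=
        mul_le_mul (hle x) hsum (Finset.sum_nonneg fun z _ => (hw' z).le)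
          (mul_nonneg hc (hw' x).le)
    _ = c ^ 2 * w' x * ∑ z ∈ U, w z := by ring

theorem plackettLuce_le_pow_mul [DecidableEq Y] (hw : ∀ z, 0 < w z) (hw' : ∀ z, 0 < w' z)
    (hle : ∀ z, w z ≤ c * w' z) (hle' : ∀ z, w' z ≤ c * w z) {m : ℕ} (S : Finset Y)
    (τ : Fin m → Y) :
    plackettLuce w S τ ≤ (c ^ 2) ^ m * plackettLuce w' S τ := by
  calc plackettLuce w S τ ≤ ∏ i, c ^ 2 * (w' (τ i) / ∑ z ∈ unchosen S τ i, w' z) :=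
        Finset.prod_le_prod
          (fun i _ => div_nonneg (hw _).le (Finset.sum_nonneg fun z _ => (hw z).le))
          fun i _ => div_sum_le_sq_mul_div_sum hw hw' hle hle' _ _
    _ = (c ^ 2) ^ m * plackettLuce w' S τ := by
      rw [Finset.prod_mul_distrib, Finset.prod_const, Finset.card_univ, Fintype.card_fin]
      rfl

end Privacy

theorem exp_mul_div_le_exp_half_mul {ε Δ r s : ℝ} (hε : 0 ≤ ε) (hΔ : 0 < Δ) (h : r - s ≤ Δ) :
    exp (ε * r / (2 * Δ)) ≤ exp (ε / 2) * exp (ε * s / (2 * Δ)) := by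
  rw [← exp_add, exp_le_exp, ← sub_nonneg]
  have key : ε / 2 + ε * s / (2 * Δ) - ε * r / (2 * Δ) = ε * (Δ - (r - s)) / (2 * Δ) := by
    field_simp
    ring
  rw [key]
  exact div_nonneg (mul_nonneg hε (sub_nonneg.2 h)) (by positivity)

theorem gumbel_topk_is_sequential_exponential_general {D Y : Type*} [Fintype Y] [DecidableEq Y]
    {Ω : Type*} [MeasurableSpace Ω] (P : Measure Ω)
    (N : D → D → Prop) (ε Δ : ℝ) (hε : 0 < ε) (hΔ : 0 < Δ)
    (q : D → Y → ℝ) (hsens : ∀ A B y, N A B → |q A y - q B y| ≤ Δ)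
    (G : Y → Ω → ℝ) (hmeas : ∀ y, Measurable (G y))
    (hindep : iIndepFun G P)
    (hdist : ∀ y, Measure.map (G y) P = gumbelMeasure (2 * Δ / ε))
    (k : ℕ) (σ : Fin k → Y) (hσ : Function.Injective σ) :
    (∀ X : D,
        P (topKEvent (q X) G σ)
          = ENNReal.ofReal (∏ i : Fin k,
              exp (ε * q X (σ i) / (2 * Δ)) /
                ∑ y ∈ Finset.univ.filter (fun y => ∀ j : Fin k, j < i → σ j ≠ y),
                  exp (ε * q X y / (2 * Δ)))) ∧
    (∀ A B, N A B →
        P (topKEvent (q A) G σ)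
          ≤ ENNReal.ofReal (exp (k * ε)) * P (topKEvent (q B) G σ)) := by
  have hlaw : ∀ X, P (topKEvent (q X) G σ)
      = ENNReal.ofReal (plackettLuce (fun y => exp (ε * q X y / (2 * Δ))) Finset.univ σ) := by
    intro X
    simp_rw [measure_topKEvent (by positivity) hmeas hindep hdist (q X) hσ, div_div_eq_mul_div,
      mul_comm _ ε]
  refine ⟨hlaw, fun A B hAB => ?_⟩
  have hBA : ∀ y, |q B y - q A y| ≤ Δ := fun y => abs_sub_comm (q A y) (q B y) ▸ hsens A B y hAB
  have hratio := plackettLuce_le_pow_mul (fun _ => exp_pos _) (fun _ => exp_pos _)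
    (fun y => exp_mul_div_le_exp_half_mul hε.le hΔ (abs_le.1 (hsens A B y hAB)).2)
    (fun y => exp_mul_div_le_exp_half_mul hε.le hΔ (abs_le.1 (hBA y)).2) Finset.univ σ
  rw [← exp_nat_mul, ← exp_nat_mul, show ((k : ℕ) : ℝ) * ((2 : ℕ) * (ε / 2)) = k * ε by
    push_cast; ring] at hratio
  rw [hlaw, hlaw, ← ENNReal.ofReal_mul (exp_pos _).le]
  exact ENNReal.ofReal_le_ofReal hratio

/-- Gumbel top-`k`: selecting the `k` candidates with the largest noisy utilities
(i.i.d. `Gumbel(2Δ/ε)` noise added to each utility) is equal in distribution to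
applying the exponential mechanism (parameter `ε`) sequentially `k` times without
replacement: the probability that the ordered top-`k` list equals a given injective
sequence `σ` is the Plackett–Luce product
`∏ i, w(σ i) / ∑_{y not yet chosen} w y` with `w y = exp(ε q(X,y)/(2Δ))`.
Hence the top-`k` selection inherits the privacy of the `k`-fold sequential
exponential mechanism, i.e. it is `kε`-differentially private. -/
theorem gumbel_topk_is_sequential_exponential {D Y : Type*} [Fintype Y] [Nonempty Y] [DecidableEq Y]
    {Ω : Type*} [MeasurableSpace Ω] (P : Measure Ω) [IsProbabilityMeasure P]
    (N : D → D → Prop) (ε Δ : ℝ) (hε : 0 < ε) (hΔ : 0 < Δ)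
    (q : D → Y → ℝ) (hsens : ∀ A B y, N A B → |q A y - q B y| ≤ Δ)
    (G : Y → Ω → ℝ) (hmeas : ∀ y, Measurable (G y))
    (hindep : iIndepFun G P)
    (hdist : ∀ y, Measure.map (G y) P = gumbelMeasure (2 * Δ / ε))
    (k : ℕ) (σ : Fin k → Y) (hσ : Function.Injective σ) :
    (∀ X : D,
        P (topKEvent (q X) G σ)
          = ENNReal.ofReal (∏ i : Fin k,
              exp (ε * q X (σ i) / (2 * Δ)) /
                ∑ y ∈ Finset.univ.filter (fun y => ∀ j : Fin k, j < i → σ j ≠ y),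
                  exp (ε * q X y / (2 * Δ)))) ∧
    (∀ A B, N A B →
        P (topKEvent (q A) G σ)
          ≤ ENNReal.ofReal (exp (k * ε)) * P (topKEvent (q B) G σ)) :=
  gumbel_topk_is_sequential_exponential_general P N ε Δ hε hΔ q hsens G hmeas hindep hdist k σ hσ
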